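/- arXiv:1209.3680 — 4 statements merged into one kernel-verified Lean document; each statement's English description precedes it below -/
import Mathlib

section
/- Let X be a (2,D)-smooth separable Banach space, i.e. for every martingale difference sequence (d_1,...,d_N) with values in X, E(|d_1+...+d_N|^2) ≤ D^2 Σ_{n=1}^N E(|d_n|^2). Let (d_n) be a stationary sequence of martingale differences in L^2(Ω,X) (d_n = d∘θ^n with θ measure-preserving, d F_1-measurable, E(d|F_0)=0). Then for every S ≥ 1, P( sup_{1≤s≤S} max_{1≤k≤2^s} |S_k(d)|/(2^{s/2} (max(1,log s))^{1/2}) > λ ) ≤ C D^2 ||d||_2^2 S / (λ^2 max(1,log S)) for a universal constant C, where S_k(d)=d_0+...+d_{k-1}. -/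
open MeasureTheory Filter Real

/-- `L(x) = max(1, log x)`. -/
noncomputable def llog (x : ℝ) : ℝ := max 1 (Real.log x)

/-- Partial (Birkhoff) sums `S_n(d) = ∑_{i<n} d ∘ θ^i`. -/
noncomputable def birkhoff {Ω X : Type*} [AddCommMonoid X] (θ : Ω → Ω) (d : Ω → X)
    (n : ℕ) (ω : Ω) : X :=
  ∑ i ∈ Finset.range n, d (θ^[i] ω)

/-- A Banach space `X` is `(r,D)`-smooth: for every martingale difference sequence
`(d_n)` with values in `X`, `E‖d_0+⋯+d_{N-1}‖^r ≤ D^r ∑ E‖d_n‖^r`. -/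
def SmoothBanach (X : Type) [NormedAddCommGroup X] [NormedSpace ℝ X] [CompleteSpace X]
    (r D : ℝ) : Prop :=
  ∀ (Ω : Type) [m : MeasurableSpace Ω] (μ : Measure Ω), IsProbabilityMeasure μ →
    ∀ (ℱ : ℕ → MeasurableSpace Ω), (∀ n, ℱ n ≤ m) → Monotone ℱ →
      ∀ (N : ℕ) (d : ℕ → Ω → X),
        (∀ n, MemLp (d n) (ENNReal.ofReal r) μ) →
        (∀ n, StronglyMeasurable[ℱ (n + 1)] (d n)) →
        (∀ n, μ[d n | ℱ n] =ᵐ[μ] 0) →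
        ∫ ω, ‖∑ n ∈ Finset.range N, d n ω‖ ^ r ∂μ ≤
          D ^ r * ∑ n ∈ Finset.range N, ∫ ω, ‖d n ω‖ ^ r ∂μ


/-!
The Birkhoff sums `S_k(d)` form a martingale for the filtration `F_k = θ^{-k}(F_0)`, so
`‖S_k(d)‖²` is a submartingale (conditional Jensen) and Doob's maximal inequality bounds the
probability that `max_{k ≤ 2^s} ‖S_k(d)‖ ≥ λ 2^{s/2} L(s)^{1/2}` by
`E‖S_{2^s}(d)‖² / (λ² 2^s L(s))`. By 2-smoothness and stationarity `E‖S_N(d)‖² ≤ D² N ‖d‖₂²`, so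
the `s`-th dyadic block has probability at most `D² ‖d‖₂² / (λ² L(s))`. A union bound over
`1 ≤ s ≤ S` and `∑_{s ≤ S} 1 / L(s) ≤ 4 S / L(S)` conclude.
-/

lemma one_le_llog (x : ℝ) : 1 ≤ llog x := le_max_left _ _

lemma llog_pos (x : ℝ) : 0 < llog x := one_pos.trans_le (one_le_llog x)

lemma llog_le_two_mul_sqrt {x : ℝ} (hx : 1 ≤ x) : llog x ≤ 2 * √x := by
  have hsqrt : 1 ≤ √x := Real.one_le_sqrt.mpr hx
  have hlog : Real.log x ≤ 2 * √x := by
    calc Real.log x = 2 * Real.log √x := by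
          rw [Real.log_sqrt (by linarith)]; ring
      _ ≤ 2 * (√x - 1) := by gcongr; exact Real.log_le_sub_one_of_pos (by linarith)
      _ ≤ 2 * √x := by linarith
  exact max_le (by linarith) hlog

lemma llog_le_two_mul_llog {s t : ℝ} (ht : 0 < t) (hts : t ≤ s * s) : llog t ≤ 2 * llog s := by
  have hlog : Real.log t ≤ 2 * Real.log s := by
    calc Real.log t ≤ Real.log (s * s) := Real.log_le_log ht hts
      _ = 2 * Real.log s := by rw [← pow_two, Real.log_pow]; norm_num
  exact max_le (by linarith [one_le_llog s])
    (hlog.trans (by gcongr; exact le_max_right _ _))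

/-- Terms with `s ≤ √S` are at most `1` and there are at most `√S ≤ 2 S / L(S)` of them;
for the others `L(S) ≤ 2 L(s)`. -/
lemma sum_Icc_inv_llog_le {S : ℕ} (hS : 1 ≤ S) :
    ∑ s ∈ Finset.Icc 1 S, 1 / llog s ≤ 4 * S / llog S := by
  have hS' : (1 : ℝ) ≤ S := by exact_mod_cast hS
  have hLS := llog_pos (S : ℝ)
  have hsmall : ∑ s ∈ Finset.Ioc 0 (Nat.sqrt S), 1 / llog s ≤ 2 * S / llog S := by
    calc ∑ s ∈ Finset.Ioc 0 (Nat.sqrt S), 1 / llog s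
        ≤ (Finset.Ioc 0 (Nat.sqrt S)).card • (1 : ℝ) :=
          Finset.sum_le_card_nsmul _ _ _ fun s _ =>
            (div_le_one (llog_pos _)).mpr (one_le_llog _)
      _ ≤ √S := by simpa using Real.nat_sqrt_le_real_sqrt
      _ ≤ 2 * S / llog S := by
          rw [le_div_iff₀ hLS]
          nlinarith [llog_le_two_mul_sqrt hS', Real.mul_self_sqrt (by linarith : (0 : ℝ) ≤ S),
            Real.sqrt_nonneg S]
  have hlarge : ∑ s ∈ Finset.Ioc (Nat.sqrt S) S, 1 / llog s ≤ 2 * S / llog S := by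
    calc ∑ s ∈ Finset.Ioc (Nat.sqrt S) S, 1 / llog s
        ≤ (Finset.Ioc (Nat.sqrt S) S).card • (2 / llog S) := by
          refine Finset.sum_le_card_nsmul _ _ _ fun s hs => ?_
          have hSs : S < s * s := Nat.sqrt_lt.mp (Finset.mem_Ioc.mp hs).1
          have hL := llog_le_two_mul_llog (s := s) (by positivity) (by exact_mod_cast hSs.le)
          rw [div_le_div_iff₀ (llog_pos _) hLS]
          linarith
      _ ≤ S • (2 / llog S) := by
          gcongr
          simp
      _ = 2 * S / llog S := by rw [nsmul_eq_mul]; ring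
  rw [← zero_add 1, Finset.Icc_add_one_left_eq_Ioc,
    ← Finset.sum_Ioc_consecutive _ (Nat.zero_le _) (Nat.sqrt_le_self S)]
  linarith [show 4 * (S : ℝ) / llog S = 2 * S / llog S + 2 * S / llog S by ring]

section MartingaleNorm

variable {E : Type*} [NormedAddCommGroup E] [NormedSpace ℝ E] [CompleteSpace E]
  {Ω : Type*} {m0 : MeasurableSpace Ω} {μ : Measure Ω} {p : ℝ}

theorem MeasureTheory.Martingale.submartingale_norm_rpow {ι : Type*} [Preorder ι]
    {𝒢 : Filtration ι m0} {f : ι → Ω → E} (hf : Martingale f 𝒢 μ) (hp : 1 ≤ p)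
    (hint : ∀ i, Integrable (fun ω => ‖f i ω‖ ^ p) μ) :
    Submartingale (fun i ω => ‖f i ω‖ ^ p) 𝒢 μ := by
  refine ⟨fun i => ((hf.stronglyAdapted i).norm.measurable.pow_const p).stronglyMeasurable,
    fun i j hij => ?_, hint⟩
  filter_upwards [hf.condExp_ae_eq hij, Integrable.norm_condExp_rpow_le (m := 𝒢 i) hp (hint j)]
    with ω hcond hjensen
  rwa [← hcond]

theorem MeasureTheory.Martingale.maximal_ineq_norm_rpow [IsFiniteMeasure μ]
    {𝒢 : Filtration ℕ m0} {f : ℕ → Ω → E} (hf : Martingale f 𝒢 μ) (hp : 1 ≤ p)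
    (hint : ∀ n, Integrable (fun ω => ‖f n ω‖ ^ p) μ) {ε : ℝ} (hε : 0 ≤ ε) (N : ℕ) :
    ε ^ p * μ.real {ω | ∃ k ≤ N, ε ≤ ‖f k ω‖} ≤ ∫ ω, ‖f N ω‖ ^ p ∂μ := by
  have hp0 : 0 < p := by linarith
  have hmax := maximal_ineq (hf.submartingale_norm_rpow hp hint)
    (fun n ω => by positivity) (ε := (ε ^ p).toNNReal) N
  have hset : {ω | ((ε ^ p).toNNReal : ℝ) ≤ (Finset.range (N + 1)).sup'
      Finset.nonempty_range_add_one fun k => ‖f k ω‖ ^ p} = {ω | ∃ k ≤ N, ε ≤ ‖f k ω‖} := by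
    ext ω
    simp [Finset.le_sup'_iff, Real.coe_toNNReal _ (by positivity : 0 ≤ ε ^ p),
      Real.rpow_le_rpow_iff hε (norm_nonneg _) hp0]
  rw [hset] at hmax
  calc ε ^ p * μ.real {ω | ∃ k ≤ N, ε ≤ ‖f k ω‖}
      ≤ ∫ ω in {ω | ∃ k ≤ N, ε ≤ ‖f k ω‖}, ‖f N ω‖ ^ p ∂μ := by
        have hreal := ENNReal.toReal_mono ENNReal.ofReal_ne_top hmax
        rwa [ENNReal.toReal_mul, ENNReal.toReal_ofReal
          (integral_nonneg fun ω => by positivity), ENNReal.coe_toReal,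
          Real.coe_toNNReal _ (by positivity)] at hreal
    _ ≤ ∫ ω, ‖f N ω‖ ^ p ∂μ :=
        setIntegral_le_integral (hint N) (ae_of_all _ fun ω => by positivity)

end MartingaleNorm

theorem MeasureTheory.MeasurePreserving.condExp_comp {Ω Ω' E : Type*} [NormedAddCommGroup E]
    [NormedSpace ℝ E] [CompleteSpace E] {m : MeasurableSpace Ω} {F m' : MeasurableSpace Ω'}
    {μ : Measure Ω} {ν : Measure Ω'} [IsFiniteMeasure μ] {T : Ω → Ω'}
    (hT : MeasurePreserving T μ ν) (hF : F ≤ m') {g : Ω' → E}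
    (hg : Integrable g ν) :
    μ[g ∘ T | F.comap T] =ᵐ[μ] ν[g | F] ∘ T := by
  have : IsFiniteMeasure ν := hT.map_eq ▸ μ.isFiniteMeasure_map T
  have hFT : F.comap T ≤ m := (MeasurableSpace.comap_mono hF).trans hT.measurable.comap_le
  refine (ae_eq_condExp_of_forall_setIntegral_eq hFT (hT.integrable_comp_of_integrable hg)
    (fun s _ _ => (hT.integrable_comp_of_integrable integrable_condExp).integrableOn)
    (fun s hs _ => ?_) ?_).symm
  · obtain ⟨t, ht, rfl⟩ := hs
    have hmap : ∀ f : Ω' → E, AEStronglyMeasurable f ν →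
        ∫ ω in T ⁻¹' t, f (T ω) ∂μ = ∫ y in t, f y ∂ν := fun f hf => by
      rw [← hT.map_eq] at hf ⊢
      exact (setIntegral_map (hF t ht) hf hT.aemeasurable).symm
    simp only [Function.comp_apply]
    rw [hmap _ integrable_condExp.aestronglyMeasurable, hmap _ hg.aestronglyMeasurable,
      setIntegral_condExp hF hg ht]
  · exact (stronglyMeasurable_condExp.comp_measurable
      (comap_measurable T)).aestronglyMeasurable

section Stationary

variable {Ω : Type*} {F0 m : MeasurableSpace Ω} {θ : Ω → Ω}

lemma comap_iterate_succ (θ : Ω → Ω) (F0 : MeasurableSpace Ω) (n : ℕ) :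
    F0.comap θ^[n + 1] = (F0.comap θ).comap θ^[n] := by
  rw [Function.iterate_succ', MeasurableSpace.comap_comp]

def iterateComapFiltration (hθ : Measurable θ) (hF0 : F0 ≤ m) (hF0θ : F0 ≤ F0.comap θ) :
    Filtration ℕ m where
  seq n := F0.comap θ^[n]
  mono' := monotone_nat_of_le_succ fun n => by
    rw [comap_iterate_succ]
    exact MeasurableSpace.comap_mono hF0θ
  le' n := (MeasurableSpace.comap_mono hF0).trans (hθ.iterate n).comap_le

lemma birkhoff_eq_sum {E : Type*} [AddCommMonoid E] (θ : Ω → Ω) (d : Ω → E) (n : ℕ) :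
    birkhoff θ d n = ∑ i ∈ Finset.range n, d ∘ θ^[i] := by
  ext ω
  simp [birkhoff]

lemma birkhoff_succ_sub {E : Type*} [AddCommGroup E] (θ : Ω → Ω) (d : Ω → E) (n : ℕ) :
    birkhoff θ d (n + 1) - birkhoff θ d n = d ∘ θ^[n] := by
  simp [birkhoff_eq_sum, Finset.sum_range_succ]

variable {E : Type*} [NormedAddCommGroup E] {d : Ω → E}

lemma stronglyMeasurable_comp_iterate (hθ : Measurable θ) (hF0 : F0 ≤ m)
    (hF0θ : F0 ≤ F0.comap θ) (hdm : StronglyMeasurable[F0.comap θ] d) (n : ℕ) :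
    StronglyMeasurable[iterateComapFiltration hθ hF0 hF0θ (n + 1)] (d ∘ θ^[n]) := by
  change StronglyMeasurable[F0.comap θ^[n + 1]] _
  rw [comap_iterate_succ]
  exact hdm.comp_measurable (comap_measurable _)

variable [NormedSpace ℝ E] [CompleteSpace E] {μ : Measure Ω} [IsFiniteMeasure μ]

theorem condExp_comp_iterate_eq_zero (hθ : MeasurePreserving θ μ μ) (hF0 : F0 ≤ m)
    (hd : Integrable d μ) (hd0 : μ[d | F0] =ᵐ[μ] 0) (n : ℕ) :
    μ[d ∘ θ^[n] | F0.comap θ^[n]] =ᵐ[μ] 0 :=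
  ((hθ.iterate n).condExp_comp hF0 hd).trans
    ((hθ.iterate n).quasiMeasurePreserving.ae_eq_comp hd0)

theorem martingale_birkhoff (hθ : MeasurePreserving θ μ μ) (hF0 : F0 ≤ m)
    (hF0θ : F0 ≤ F0.comap θ) (hd : Integrable d μ) (hdm : StronglyMeasurable[F0.comap θ] d)
    (hd0 : μ[d | F0] =ᵐ[μ] 0) :
    Martingale (birkhoff θ d) (iterateComapFiltration hθ.measurable hF0 hF0θ) μ := by
  set 𝒢 := iterateComapFiltration hθ.measurable hF0 hF0θ
  have hint : ∀ n, Integrable (birkhoff θ d n) μ := fun n => by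
    rw [birkhoff_eq_sum]
    exact integrable_finsetSum' _ fun i _ => (hθ.iterate i).integrable_comp_of_integrable hd
  have hadapted : StronglyAdapted 𝒢 (birkhoff θ d) := fun n => by
    rw [birkhoff_eq_sum]
    exact Finset.stronglyMeasurable_sum _ fun i hi =>
      (stronglyMeasurable_comp_iterate hθ.measurable hF0 hF0θ hdm i).mono
        (𝒢.mono (Finset.mem_range.mp hi))
  refine martingale_of_condExp_sub_eq_zero_nat hadapted hint fun n => ?_
  rw [birkhoff_succ_sub]
  exact condExp_comp_iterate_eq_zero hθ hF0 hd hd0 n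

end Stationary

section SmoothMaximal

variable {X : Type} [NormedAddCommGroup X] [NormedSpace ℝ X] [CompleteSpace X]
  {Ω : Type} {F0 : MeasurableSpace Ω} [m : MeasurableSpace Ω] {μ : Measure Ω}
  [IsProbabilityMeasure μ] {θ : Ω → Ω} {d : Ω → X} {D : ℝ}

theorem integral_norm_birkhoff_sq_le (hX : SmoothBanach X 2 D) (hθ : MeasurePreserving θ μ μ)
    (hF0 : F0 ≤ m) (hF0θ : F0 ≤ F0.comap θ) (hd : MemLp d 2 μ)
    (hdm : StronglyMeasurable[F0.comap θ] d) (hd0 : μ[d | F0] =ᵐ[μ] 0) (N : ℕ) :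
    ∫ ω, ‖birkhoff θ d N ω‖ ^ 2 ∂μ ≤ D ^ 2 * N * ∫ ω, ‖d ω‖ ^ 2 ∂μ := by
  set 𝒢 := iterateComapFiltration hθ.measurable hF0 hF0θ
  have hsmooth := hX Ω μ inferInstance 𝒢 𝒢.le 𝒢.mono' N (fun n => d ∘ θ^[n])
    (fun n => by simpa using hd.comp_measurePreserving (hθ.iterate n))
    (stronglyMeasurable_comp_iterate hθ.measurable hF0 hF0θ hdm)
    (condExp_comp_iterate_eq_zero hθ hF0 (hd.integrable one_le_two) hd0)
  have hstationary : ∀ n, ∫ ω, ‖d (θ^[n] ω)‖ ^ 2 ∂μ = ∫ ω, ‖d ω‖ ^ 2 ∂μ := fun n => by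
    have hmeas : AEStronglyMeasurable (fun ω => ‖d ω‖ ^ 2) (μ.map θ^[n]) := by
      rw [(hθ.iterate n).map_eq]
      exact hd.aestronglyMeasurable.norm.pow 2
    rw [← integral_map (hθ.iterate n).aemeasurable hmeas, (hθ.iterate n).map_eq]
  simp only [Real.rpow_two, Function.comp_apply, hstationary] at hsmooth
  simpa [birkhoff, mul_assoc] using hsmooth

theorem measureReal_exists_le_norm_birkhoff_le (hX : SmoothBanach X 2 D)
    (hθ : MeasurePreserving θ μ μ) (hF0 : F0 ≤ m) (hF0θ : F0 ≤ F0.comap θ) (hd : MemLp d 2 μ)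
    (hdm : StronglyMeasurable[F0.comap θ] d) (hd0 : μ[d | F0] =ᵐ[μ] 0) {ε : ℝ} (hε : 0 < ε)
    (N : ℕ) :
    μ.real {ω | ∃ k ≤ N, ε ≤ ‖birkhoff θ d k ω‖} ≤ D ^ 2 * N * (∫ ω, ‖d ω‖ ^ 2 ∂μ) / ε ^ 2 := by
  have hint : ∀ n, Integrable (fun ω => ‖birkhoff θ d n ω‖ ^ (2 : ℝ)) μ := fun n => by
    have hmem : MemLp (birkhoff θ d n) 2 μ := by
      rw [birkhoff_eq_sum]
      exact memLp_finsetSum' _ fun i _ => hd.comp_measurePreserving (hθ.iterate i)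
    simpa using hmem.integrable_norm_rpow'
  have hmart := martingale_birkhoff hθ hF0 hF0θ (hd.integrable one_le_two) hdm hd0
  have hdoob := hmart.maximal_ineq_norm_rpow one_le_two hint hε.le N
  simp only [Real.rpow_two] at hdoob
  rw [le_div_iff₀ (by positivity), mul_comm]
  exact hdoob.trans (integral_norm_birkhoff_sq_le hX hθ hF0 hF0θ hd hdm hd0 N)

end SmoothMaximal

def dyadicExceedance {Ω X : Type*} [NormedAddCommGroup X] (θ : Ω → Ω) (d : Ω → X) (lam : ℝ)
    (s : ℕ) : Set Ω :=
  {ω | ∃ k ∈ Finset.Icc 1 (2 ^ s),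
    lam < ‖birkhoff θ d k ω‖ / ((2 : ℝ) ^ ((s : ℝ) / 2) * Real.sqrt (llog (s : ℝ)))}

lemma sq_rpow_half_mul_sqrt_llog (s : ℕ) :
    ((2 : ℝ) ^ ((s : ℝ) / 2) * √(llog s)) ^ 2 = 2 ^ s * llog s := by
  rw [mul_pow, Real.sq_sqrt (llog_pos _).le, ← Real.rpow_natCast _ 2,
    ← Real.rpow_mul zero_le_two, Nat.cast_ofNat, div_mul_cancel₀ _ two_ne_zero,
    Real.rpow_natCast]

theorem measureReal_dyadicExceedance_le {X : Type} [NormedAddCommGroup X] [NormedSpace ℝ X]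
    [CompleteSpace X] {Ω : Type} {F0 : MeasurableSpace Ω} [m : MeasurableSpace Ω]
    {μ : Measure Ω} [IsProbabilityMeasure μ] {θ : Ω → Ω} {d : Ω → X} {D : ℝ}
    (hX : SmoothBanach X 2 D) (hθ : MeasurePreserving θ μ μ) (hF0 : F0 ≤ m)
    (hF0θ : F0 ≤ F0.comap θ) (hd : MemLp d 2 μ) (hdm : StronglyMeasurable[F0.comap θ] d)
    (hd0 : μ[d | F0] =ᵐ[μ] 0) {lam : ℝ} (hlam : 0 < lam) (s : ℕ) :
    μ.real (dyadicExceedance θ d lam s) ≤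
      D ^ 2 * (∫ ω, ‖d ω‖ ^ 2 ∂μ) / lam ^ 2 * (1 / llog s) := by
  have hllog := llog_pos s
  set c : ℝ := (2 : ℝ) ^ ((s : ℝ) / 2) * √(llog s)
  have hc : 0 < c := by positivity
  have hsub : dyadicExceedance θ d lam s ⊆
      {ω | ∃ k ≤ 2 ^ s, lam * c ≤ ‖birkhoff θ d k ω‖} := by
    rintro ω ⟨k, hk, hlt⟩
    exact ⟨k, (Finset.mem_Icc.mp hk).2, ((lt_div_iff₀ hc).mp hlt).le⟩
  calc μ.real (dyadicExceedance θ d lam s)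
      ≤ D ^ 2 * ↑(2 ^ s : ℕ) * (∫ ω, ‖d ω‖ ^ 2 ∂μ) / (lam * c) ^ 2 :=
        (measureReal_mono hsub).trans (measureReal_exists_le_norm_birkhoff_le hX hθ hF0 hF0θ hd
          hdm hd0 (by positivity) _)
    _ = D ^ 2 * (∫ ω, ‖d ω‖ ^ 2 ∂μ) / lam ^ 2 * (1 / llog s) := by
        rw [mul_pow, sq_rpow_half_mul_sqrt_llog]
        field_simp
        push_cast
        ring

/-- maximal estimate over dyadic blocks for a stationary martingale
difference `d` with values in a `(2,D)`-smooth separable Banach space. -/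
theorem stmt0 :
    ∃ C : ℝ, 0 < C ∧
      ∀ (X : Type) [NormedAddCommGroup X] [NormedSpace ℝ X] [CompleteSpace X]
        [TopologicalSpace.SeparableSpace X],
      ∀ (D : ℝ), 1 ≤ D → SmoothBanach X 2 D →
      ∀ (Ω : Type) [m : MeasurableSpace Ω] (μ : Measure Ω), IsProbabilityMeasure μ →
      ∀ (θ : Ω → Ω), MeasurePreserving θ μ μ →
      ∀ (F0 : MeasurableSpace Ω), F0 ≤ m → F0 ≤ MeasurableSpace.comap θ F0 →
        MeasurableSpace.comap θ F0 ≤ m →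
      ∀ (d : Ω → X), MemLp d 2 μ → StronglyMeasurable[MeasurableSpace.comap θ F0] d →
        μ[d | F0] =ᵐ[μ] 0 →
      ∀ (S : ℕ), 1 ≤ S → ∀ lam : ℝ, 0 < lam →
        (μ {ω | ∃ s ∈ Finset.Icc 1 S, ∃ k ∈ Finset.Icc 1 (2 ^ s),
            lam < ‖birkhoff θ d k ω‖ /
              ((2 : ℝ) ^ ((s : ℝ) / 2) * Real.sqrt (llog (s : ℝ)))}).toReal ≤
          C * D ^ 2 * (∫ ω, ‖d ω‖ ^ 2 ∂μ) * (S : ℝ) / (lam ^ 2 * llog (S : ℝ)) := by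
  refine ⟨4, four_pos, ?_⟩
  intro X _ _ _ _ D _ hX Ω m μ _ θ hθ F0 hF0 hF0θ _ d hd hdm hd0 S hS lam hlam
  set E := ∫ ω, ‖d ω‖ ^ 2 ∂μ
  calc μ.real _ ≤ μ.real (⋃ s ∈ Finset.Icc 1 S, dyadicExceedance θ d lam s) :=
        measureReal_mono fun ω hω => by
          obtain ⟨s, hs, hω⟩ := hω
          exact Set.mem_biUnion hs hω
    _ ≤ ∑ s ∈ Finset.Icc 1 S, μ.real (dyadicExceedance θ d lam s) :=
        measureReal_biUnion_finset_le _ _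
    _ ≤ ∑ s ∈ Finset.Icc 1 S, D ^ 2 * E / lam ^ 2 * (1 / llog s) :=
        Finset.sum_le_sum fun s _ =>
          measureReal_dyadicExceedance_le (m := m) hX hθ hF0 hF0θ hd hdm hd0 hlam s
    _ ≤ D ^ 2 * E / lam ^ 2 * (4 * S / llog S) := by
        rw [← Finset.mul_sum]
        have hE : 0 ≤ E := integral_nonneg fun ω => by positivity
        gcongr
        exact sum_Icc_inv_llog_le hS
    _ = 4 * D ^ 2 * E * S / (lam ^ 2 * llog S) := by ring
end

section
/- Let (Ω,F,P) be a probability space, X and B Banach spaces, C a vector space of measurable X-valued functions on Ω, and (T_n) a sequence of linear maps from B to C. Assume there is a positive decreasing function L on (0,∞) with L(λ) → 0 as λ → ∞ such that P(sup_n |T_n x|_X > λ|x|_B) ≤ L(λ) for all λ > 0 and x ∈ B. Then the set {x ∈ B : |T_n x|_X → 0 P-a.s.} is closed in B. -/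
/-! Let `x` lie in the closure of the set and fix `ε, l > 0`. Choose `z` in the set with
`l‖x - z‖ < ε`. Since `T_n z → 0` a.s., a.s. on the event `‖T_n x‖ > ε` infinitely often we have
`‖T_n (x - z)‖ > l‖x - z‖` for some `n`, so the maximal estimate bounds the probability of that
event by `L(l)`. Letting `l → ∞` shows that it is null, for every `ε`. -/

open MeasureTheory Filter Topology

theorem Filter.Frequently.sub_lt_norm_sub {ι E : Type*} [SeminormedAddCommGroup E] {l : Filter ι}
    {u v : ι → E} {ε δ : ℝ} (hu : ∃ᶠ n in l, ε < ‖u n‖) (hv : Tendsto v l (𝓝 0)) (hδ : 0 < δ) :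
    ∃ᶠ n in l, ε - δ < ‖u n - v n‖ := by
  have hv_small : ∀ᶠ n in l, ‖v n‖ < δ := tendsto_zero_iff_norm_tendsto_zero.1 hv |>.eventually
    (gt_mem_nhds hδ)
  refine (hu.and_eventually hv_small).mono fun n ⟨hun, hvn⟩ => ?_
  linarith [norm_sub_norm_le (u n) (v n)]

theorem MeasureTheory.ae_tendsto_zero_of_measure_frequently_lt_norm {Ω E : Type*}
    [MeasurableSpace Ω] [SeminormedAddCommGroup E] {μ : Measure Ω} {f : ℕ → Ω → E}
    (h : ∀ ε > 0, μ {ω | ∃ᶠ n in atTop, ε < ‖f n ω‖} = 0) :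
    ∀ᵐ ω ∂μ, Tendsto (fun n => f n ω) atTop (𝓝 0) := by
  have h_inv : ∀ᵐ ω ∂μ, ∀ k : ℕ, ∀ᶠ n in atTop, ‖f n ω‖ ≤ 1 / (k + 1) := by
    refine ae_all_iff.2 fun k => ?_
    simpa [Filter.not_frequently] using measure_eq_zero_iff_ae_notMem.1 (h _ Nat.one_div_pos_of_nat)
  filter_upwards [h_inv] with ω hω
  refine NormedAddGroup.tendsto_nhds_zero.2 fun ε hε => ?_
  obtain ⟨k, hk⟩ := exists_nat_one_div_lt hε
  exact (hω k).mono fun n hn => hn.trans_lt hk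

section BanachPrinciple

variable {Ω X B : Type*} [MeasurableSpace Ω] {μ : Measure Ω}
  [SeminormedAddCommGroup X] [NormedSpace ℝ X] [SeminormedAddCommGroup B] [NormedSpace ℝ B]

theorem measure_frequently_lt_norm_le_of_ae_tendsto_zero (T : ℕ → B →ₗ[ℝ] (Ω → X)) {x z : B}
    (hz : ∀ᵐ ω ∂μ, Tendsto (fun n => T n z ω) atTop (𝓝 0)) {c ε : ℝ} (hc : c < ε) :
    μ {ω | ∃ᶠ n in atTop, ε < ‖T n x ω‖} ≤ μ {ω | ∃ n, c < ‖T n (x - z) ω‖} := by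
  refine measure_mono_ae ?_
  filter_upwards [hz] with ω hω hωx
  obtain ⟨n, hn⟩ := (Frequently.sub_lt_norm_sub hωx hω (sub_pos.2 hc)).exists
  exact ⟨n, by simpa using hn⟩

theorem isClosed_setOf_ae_tendsto_zero [IsFiniteMeasure μ] (T : ℕ → B →ₗ[ℝ] (Ω → X))
    {L : ℝ → ℝ} (hL : Tendsto L atTop (𝓝 0))
    (hmax : ∀ l > 0, ∀ x, μ.real {ω | ∃ n, l * ‖x‖ < ‖T n x ω‖} ≤ L l) :
    IsClosed {x | ∀ᵐ ω ∂μ, Tendsto (fun n => T n x ω) atTop (𝓝 0)} := by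
  refine isClosed_of_closure_subset fun x hx => ae_tendsto_zero_of_measure_frequently_lt_norm
    fun ε hε => ?_
  have h_le : ∀ᶠ l in atTop, μ.real {ω | ∃ᶠ n in atTop, ε < ‖T n x ω‖} ≤ L l := by
    filter_upwards [eventually_gt_atTop 0] with l hl
    obtain ⟨z, hz, hxz⟩ := Metric.mem_closure_iff.1 hx (ε / l) (div_pos hε hl)
    have hc : l * ‖x - z‖ < ε := by
      rw [← dist_eq_norm]
      exact (lt_div_iff₀' hl).1 hxz
    exact (ENNReal.toReal_mono (measure_ne_top μ _)
      (measure_frequently_lt_norm_le_of_ae_tendsto_zero T hz hc)).trans (hmax l hl (x - z))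
  exact (measureReal_eq_zero_iff).1 (le_antisymm (ge_of_tendsto hL h_le) measureReal_nonneg)

end BanachPrinciple

theorem stmt6_general
    (Ω : Type*) [m : MeasurableSpace Ω] (μ : Measure Ω) [IsProbabilityMeasure μ]
    (X : Type*) [NormedAddCommGroup X] [NormedSpace ℝ X]
    (B : Type*) [NormedAddCommGroup B] [NormedSpace ℝ B]
    (T : ℕ → B →ₗ[ℝ] (Ω → X))
    (L : ℝ → ℝ)
    (hLlim : Tendsto L atTop (nhds 0))
    (hmax : ∀ (l : ℝ), 0 < l → ∀ x : B,
      (μ {ω | ∃ n : ℕ, l * ‖x‖ < ‖T n x ω‖}).toReal ≤ L l) :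
    IsClosed {x : B | ∀ᵐ ω ∂μ, Tendsto (fun n => ‖T n x ω‖) atTop (nhds 0)} := by
  simp_rw [← tendsto_zero_iff_norm_tendsto_zero]
  exact isClosed_setOf_ae_tendsto_zero T hLlim hmax

/-- Banach principle. Under a uniform weak-type maximal estimate
`P(sup_n ‖T_n x‖ > λ‖x‖) ≤ L(λ)` with `L` positive, decreasing and vanishing at
infinity, the set `{x : T_n x → 0 a.s.}` is closed in `B`. -/
theorem stmt6
    (Ω : Type*) [m : MeasurableSpace Ω] (μ : Measure Ω) [IsProbabilityMeasure μ]
    (X : Type*) [NormedAddCommGroup X] [NormedSpace ℝ X] [CompleteSpace X]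
    (B : Type*) [NormedAddCommGroup B] [NormedSpace ℝ B] [CompleteSpace B]
    (T : ℕ → B →ₗ[ℝ] (Ω → X))
    (hmeas : ∀ n x, AEStronglyMeasurable (T n x) μ)
    (L : ℝ → ℝ) (hLpos : ∀ l : ℝ, 0 < l → 0 < L l)
    (hLanti : AntitoneOn L (Set.Ioi (0 : ℝ)))
    (hLlim : Tendsto L atTop (nhds 0))
    (hmax : ∀ (l : ℝ), 0 < l → ∀ x : B,
      (μ {ω | ∃ n : ℕ, l * ‖x‖ < ‖T n x ω‖}).toReal ≤ L l) :
    IsClosed {x : B | ∀ᵐ ω ∂μ, Tendsto (fun n => ‖T n x ω‖) atTop (nhds 0)} :=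
  stmt6_general Ω (m := m) μ X B T L hLlim hmax
end

section
/- Let (Ω,F,P) be a probability space, X a Banach space, B a Banach space, and (T_n) linear maps from B to measurable X-valued functions satisfying P(sup_n |T_n x|_X > λ|x|_B) ≤ L(λ) for a decreasing function L with L(λ)→0 at infinity. Then the set {x ∈ B : (T_n x(ω))_{n≥1} is relatively compact in X for P-a.e. ω} is closed in B. -/
/-!
Let `x` lie in the closure of the set `S` of good points. The maximal inequality makes
`y ↦ sup_n ‖T_n y‖` continuous in measure at `0`, so one can pick `z_k ∈ S` with
`P(sup_n ‖T_n (x - z_k)‖ > 1/(k+1)) ≤ 2⁻ᵏ`. By Borel–Cantelli, for almost every `ω` the sequences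
`(T_n z_k ω)_n` converge to `(T_n x ω)_n` uniformly in `n`; a uniform limit of totally bounded
sequences is totally bounded, and in the complete space `X` this is relative compactness.
-/

open MeasureTheory Filter Set Topology

theorem totallyBounded_range_of_tendstoUniformly {ι α β : Type*} [UniformSpace β]
    {F : ι → α → β} {f : α → β} {p : Filter ι} [p.NeBot] (hF : TendstoUniformly F f p)
    (hFi : ∀ i, TotallyBounded (range (F i))) : TotallyBounded (range f) := by
  intro V hV
  obtain ⟨W, hW, hWV⟩ := comp_mem_uniformity_sets hV
  obtain ⟨i, hi⟩ := (hF W hW).exists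
  obtain ⟨t, ht, hcover⟩ := hFi i W hW
  refine ⟨t, ht, ?_⟩
  rintro _ ⟨a, rfl⟩
  obtain ⟨y, hy, hay⟩ := mem_iUnion₂.1 (hcover ⟨a, rfl⟩)
  exact mem_iUnion₂.2 ⟨y, hy, hWV (SetRel.prodMk_mem_comp (hi a) hay)⟩

theorem isCompact_closure_iff_totallyBounded {α : Type*} [UniformSpace α] [CompleteSpace α]
    {s : Set α} : IsCompact (closure s) ↔ TotallyBounded s :=
  ⟨fun h => totallyBounded_closure.1 h.totallyBounded,
    fun h => (totallyBounded_closure.2 h).isCompact_of_isClosed isClosed_closure⟩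

section MaximalInequality

variable {Ω B X F : Type*} [MeasurableSpace Ω] {μ : Measure Ω}
  [SeminormedAddCommGroup B] [SeminormedAddCommGroup X]
  [FunLike F B (Ω → X)] (T : ℕ → F)

theorem tendsto_measure_maximal_nhds_zero [IsFiniteMeasure μ] {L : ℝ → ℝ}
    (hLlim : Tendsto L atTop (𝓝 0))
    (hmax : ∀ l : ℝ, 0 < l → ∀ y : B, (μ {ω | ∃ n, l * ‖y‖ < ‖T n y ω‖}).toReal ≤ L l)
    {ε : ℝ} (hε : 0 < ε) :
    Tendsto (fun y => μ {ω | ∃ n, ε < ‖T n y ω‖}) (𝓝 0) (𝓝 0) := by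
  refine ENNReal.tendsto_nhds_zero.2 fun δ hδ => ?_
  obtain ⟨l, hLl, hl⟩ :=
    (((ENNReal.tendsto_ofReal hLlim).eventually (gt_mem_nhds (by simpa using hδ))).and
      (eventually_gt_atTop 0)).exists
  filter_upwards [Metric.ball_mem_nhds 0 (div_pos hε hl)] with y hy
  have hly : l * ‖y‖ < ε := by
    rw [mem_ball_zero_iff, lt_div_iff₀ hl] at hy
    linarith
  calc μ {ω | ∃ n, ε < ‖T n y ω‖}
      ≤ μ {ω | ∃ n, l * ‖y‖ < ‖T n y ω‖} :=
        measure_mono fun ω ⟨n, hn⟩ => ⟨n, hly.trans hn⟩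
    _ = ENNReal.ofReal (μ {ω | ∃ n, l * ‖y‖ < ‖T n y ω‖}).toReal :=
        (ENNReal.ofReal_toReal (measure_ne_top μ _)).symm
    _ ≤ ENNReal.ofReal (L l) := ENNReal.ofReal_le_ofReal (hmax l hl y)
    _ ≤ δ := hLl.le

theorem exists_seq_ae_tendstoUniformly [AddMonoidHomClass F B (Ω → X)]
    (hT : ∀ ε : ℝ, 0 < ε → Tendsto (fun y => μ {ω | ∃ n, ε < ‖T n y ω‖}) (𝓝 0) (𝓝 0))
    {s : Set B} {x : B} (hx : x ∈ closure s) :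
    ∃ z : ℕ → B, (∀ k, z k ∈ s) ∧
      ∀ᵐ ω ∂μ, TendstoUniformly (fun k n => T n (z k) ω) (fun n => T n x ω) atTop := by
  have : (𝓝[s] x).NeBot := mem_closure_iff_nhdsWithin_neBot.1 hx
  have hsub : Tendsto (fun z => x - z) (𝓝[s] x) (𝓝 0) := by
    have h : Tendsto (fun z => x - z) (𝓝 x) (𝓝 (x - x)) := tendsto_const_nhds.sub tendsto_id
    simpa using h.mono_left nhdsWithin_le_nhds
  have hclose : ∀ k : ℕ, ∃ z ∈ s,
      μ {ω | ∃ n, 1 / ((k : ℝ) + 1) < ‖T n (x - z) ω‖} < 2⁻¹ ^ k := fun k =>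
    have hsmall := ((hT _ Nat.one_div_pos_of_nat).comp hsub).eventually
      (eventually_lt_nhds (ENNReal.pow_pos (by norm_num) k))
    have hmem : ∀ᶠ z in 𝓝[s] x, z ∈ s := self_mem_nhdsWithin
    (hmem.and hsmall).exists
  choose z hzs hz using hclose
  refine ⟨z, hzs, ?_⟩
  have hsum : ∑' k : ℕ, μ {ω | ∃ n, 1 / ((k : ℝ) + 1) < ‖T n (x - z k) ω‖} ≠ ⊤ :=
    ne_top_of_le_ne_top (by simp) (ENNReal.tsum_le_tsum fun k => (hz k).le)
  filter_upwards [ae_eventually_notMem hsum] with ω hω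
  refine Metric.tendstoUniformly_iff.2 fun ε hε => ?_
  filter_upwards [hω, tendsto_one_div_add_atTop_nhds_zero_nat.eventually (gt_mem_nhds hε)]
    with k hk hkε n
  simp only [not_exists, not_lt] at hk
  rw [dist_eq_norm, ← Pi.sub_apply, ← map_sub]
  exact (hk n).trans_lt hkε

end MaximalInequality

theorem stmt7_general
    (Ω : Type*) [m : MeasurableSpace Ω] (μ : Measure Ω) [IsProbabilityMeasure μ]
    (X : Type*) [NormedAddCommGroup X] [NormedSpace ℝ X] [CompleteSpace X]
    (B : Type*) [NormedAddCommGroup B] [NormedSpace ℝ B]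
    (T : ℕ → B →ₗ[ℝ] (Ω → X))
    (L : ℝ → ℝ)
    (hLlim : Tendsto L atTop (nhds 0))
    (hmax : ∀ (l : ℝ), 0 < l → ∀ x : B,
      (μ {ω | ∃ n : ℕ, l * ‖x‖ < ‖T n x ω‖}).toReal ≤ L l) :
    IsClosed {x : B | ∀ᵐ ω ∂μ,
      IsCompact (closure (Set.range (fun n : ℕ => T n x ω)))} := by
  refine isClosed_of_closure_subset fun x hx => ?_
  obtain ⟨z, hzS, hz⟩ := exists_seq_ae_tendstoUniformly T
    (fun _ hε => tendsto_measure_maximal_nhds_zero T hLlim hmax hε) hx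
  filter_upwards [hz, ae_all_iff.2 hzS] with ω hω hzω
  simp only [isCompact_closure_iff_totallyBounded] at hzω ⊢
  exact totallyBounded_range_of_tendstoUniformly hω hzω

/-- Banach principle for almost sure relative compactness. Under a uniform
weak-type maximal estimate, the set `{x : (T_n x(ω))_n is relatively compact in X a.s.}`
is closed in `B`. -/
theorem stmt7
    (Ω : Type*) [m : MeasurableSpace Ω] (μ : Measure Ω) [IsProbabilityMeasure μ]
    (X : Type*) [NormedAddCommGroup X] [NormedSpace ℝ X] [CompleteSpace X]
    (B : Type*) [NormedAddCommGroup B] [NormedSpace ℝ B] [CompleteSpace B]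
    (T : ℕ → B →ₗ[ℝ] (Ω → X))
    (hmeas : ∀ n x, AEStronglyMeasurable (T n x) μ)
    (L : ℝ → ℝ) (hLpos : ∀ l : ℝ, 0 < l → 0 < L l)
    (hLanti : AntitoneOn L (Set.Ioi (0 : ℝ)))
    (hLlim : Tendsto L atTop (nhds 0))
    (hmax : ∀ (l : ℝ), 0 < l → ∀ x : B,
      (μ {ω | ∃ n : ℕ, l * ‖x‖ < ‖T n x ω‖}).toReal ≤ L l) :
    IsClosed {x : B | ∀ᵐ ω ∂μ,
      IsCompact (closure (Set.range (fun n : ℕ => T n x ω)))} :=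
  stmt7_general Ω (m := m) μ X B T L hLlim hmax
end

section
/- Let H be a separable Hilbert space, θ an invertible bi-measurable measure-preserving transformation, (F_n)_{n∈Z} a filtration with F_n = θ^{-n}F_0, P_n = E(·|F_n) − E(·|F_{n-1}), and X ∈ L^2(Ω,H). Then for every n ≥ 0, ( Σ_{k=2^n}^{2^{n+1}-1} ||P_{-k}X||_{2,H} )^2 ≤ 2^n E(|E(X|F_{-2^n})|_H^2). Consequently, if Σ_{n≥1} ||E(X|F_{-n})||_{2,H}/√n < ∞ and Σ_{n≥1} ||X − E(X|F_n)||_{2,H}/√n < ∞, then Σ_{n∈Z} ||P_n X||_{2,H} < ∞. -/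
open MeasureTheory Filter Real

/-- The `L²(μ,H)` norm `‖f‖₂ = (E‖f‖²)^{1/2}`. -/
noncomputable def l2norm {Ω H : Type} (m : MeasurableSpace Ω) [NormedAddCommGroup H]
    (μ : @Measure Ω m) (f : Ω → H) : ℝ :=
  Real.sqrt (∫ ω, ‖f ω‖ ^ 2 ∂μ)

/-- The martingale difference projection `P_n = E(·|F_n) − E(·|F_{n-1})`. -/
noncomputable def Pproj {Ω H : Type} (m : MeasurableSpace Ω) [NormedAddCommGroup H]
    [InnerProductSpace ℝ H] [CompleteSpace H] (μ : @Measure Ω m)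
    (F : ℤ → MeasurableSpace Ω) (n : ℤ) (f : Ω → H) : Ω → H :=
  fun ω => (μ[f | F n]) ω - (μ[f | F (n - 1)]) ω

/-!
The conditional expectations `G n = E(X|F_n)` are the orthogonal projections of `X` onto an
increasing family of closed subspaces of `L²`, so `X - G j ⟂ G i` whenever `i ≤ j`. Hence the
increments `P_k X = G k - G (k - 1)` are pairwise orthogonal, and by Pythagoras the sum of
`‖P_k X‖²` over a block `]a, b]` is at most both `‖G b‖²` and `‖X - G a‖²`. Cauchy–Schwarz over a
dyadic block of length `2^n` bounds the sum of `‖P_k X‖` there by `√(2^n) ‖G (-2^n)‖`, resp.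
`√(2^n) ‖X - G (2^n)‖`; since `‖G (-k)‖` and `‖X - G k‖` are non-increasing in `k`, Cauchy
condensation turns the two hypotheses into summability of these dyadic bounds.
-/

open Finset
open scoped InnerProductSpace

theorem summable_of_sum_Ico_two_pow_le {u t : ℕ → ℝ} (hu : ∀ k, 0 ≤ u k)
    (hblock : ∀ n, ∑ k ∈ Ico (2 ^ n) (2 ^ (n + 1)), u k ≤ t n) (ht : Summable t) :
    Summable u := by
  have ht0 : ∀ n, 0 ≤ t n := fun n => (sum_nonneg fun k _ => hu k).trans (hblock n)
  have hcover : ∀ N, ∑ k ∈ range (2 ^ N), u k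
      = u 0 + ∑ n ∈ range N, ∑ k ∈ Ico (2 ^ n) (2 ^ (n + 1)), u k := by
    intro N
    induction N with
    | zero => simp
    | succ N ih =>
      rw [sum_range_succ, ← add_assoc, ← ih,
        sum_range_add_sum_Ico _ (Nat.pow_le_pow_right two_pos N.le_succ)]
  refine summable_of_sum_range_le hu (c := u 0 + ∑' n, t n) fun N => ?_
  calc ∑ k ∈ range N, u k ≤ ∑ k ∈ range (2 ^ N), u k :=
        sum_le_sum_of_subset_of_nonneg (range_subset_range.2 N.lt_two_pow_self.le)
          fun k _ _ => hu k
    _ ≤ u 0 + ∑' n, t n := by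
        rw [hcover]
        gcongr
        exact (sum_le_sum fun n _ => hblock n).trans (ht.sum_le_tsum _ fun n _ => ht0 n)

theorem summable_sqrt_two_pow_mul_of_summable_div_sqrt {w : ℕ → ℝ} (hw : ∀ k, 0 ≤ w k)
    (hanti : Antitone w) (hs : Summable fun k : ℕ => w k / √k) :
    Summable fun n : ℕ => √(2 ^ n) * w (2 ^ n) := by
  have hcond := (summable_condensed_iff_of_nonneg (fun k => div_nonneg (hw k) (sqrt_nonneg _))
    fun i j hi hij => div_le_div₀ (hw i) (hanti hij) (sqrt_pos.2 (by exact_mod_cast hi))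
      (sqrt_le_sqrt (by exact_mod_cast hij))).2 hs
  refine hcond.congr fun n => ?_
  push_cast
  rw [mul_div_left_comm, div_sqrt, mul_comm]

theorem le_sqrt_mul_of_sq_le {S a c : ℝ} (hc : 0 ≤ c) (h : S ^ 2 ≤ a * c ^ 2) : S ≤ √a * c :=
  calc S ≤ |S| := le_abs_self S
    _ ≤ √(a * c ^ 2) := abs_le_sqrt h
    _ = √a * c := by rw [sqrt_mul' _ (sq_nonneg c), sqrt_sq hc]

theorem Int.sum_Ico_natCast {M : Type*} [AddCommMonoid M] (φ : ℤ → M) (a b : ℕ) :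
    ∑ k ∈ Ico a b, φ k = ∑ k ∈ Ico (a : ℤ) b, φ k := by
  refine sum_nbij' (fun k => (k : ℤ)) Int.toNat ?_ ?_ ?_ ?_ ?_ <;>
    intro k hk <;> simp only [mem_Ico] at * <;> omega

theorem Int.sum_Ico_neg {M : Type*} [AddCommMonoid M] (φ : ℤ → M) (a b : ℤ) :
    ∑ k ∈ Ico a b, φ (-k) = ∑ k ∈ Ioc (-b) (-a), φ k := by
  refine sum_nbij' (fun k => -k) (fun k => -k) ?_ ?_ ?_ ?_ ?_ <;>
    intro k hk <;> simp only [mem_Ico, mem_Ioc, neg_neg] at * <;> omega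

theorem Int.sum_Ico_add_one {M : Type*} [AddCommMonoid M] (φ : ℤ → M) (a b : ℤ) :
    ∑ k ∈ Ico a b, φ (k + 1) = ∑ k ∈ Ioc a b, φ k := by
  refine sum_nbij' (· + 1) (· - 1) ?_ ?_ ?_ ?_ ?_ <;>
    intro k hk <;> simp only [mem_Ico, mem_Ioc, sub_add_cancel] at * <;> omega

theorem Int.card_Ico_two_pow (n : ℕ) : #(Ico (2 ^ n : ℤ) (2 ^ (n + 1))) = 2 ^ n := by
  rw [Int.card_Ico, pow_succ, mul_two, add_sub_cancel_right]
  exact_mod_cast Int.toNat_natCast (2 ^ n)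

/-- Abstracts `G i` being the orthogonal projection of `f` onto `K i`, for closed subspaces `K i`
increasing in `i`. -/
def IsProjectionChain {E : Type*} [NormedAddCommGroup E] [InnerProductSpace ℝ E] (f : E)
    (G : ℤ → E) : Prop :=
  ∀ ⦃i j⦄, i ≤ j → ⟪G i, f - G j⟫_ℝ = 0

namespace IsProjectionChain

variable {E : Type*} [NormedAddCommGroup E] [InnerProductSpace ℝ E] {f : E} {G : ℤ → E}

theorem norm_sq_add_norm_sub_sq (hG : IsProjectionChain f G) (a : ℤ) :
    ‖G a‖ ^ 2 + ‖f - G a‖ ^ 2 = ‖f‖ ^ 2 := by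
  have h := norm_add_sq_real (G a) (f - G a)
  rwa [add_sub_cancel, hG le_rfl, mul_zero, add_zero, eq_comm] at h

theorem norm_sq_add_sum_Ioc (hG : IsProjectionChain f G) {a b : ℤ} (hab : a ≤ b) :
    ‖G a‖ ^ 2 + ∑ k ∈ Ioc a b, ‖G k - G (k - 1)‖ ^ 2 = ‖G b‖ ^ 2 := by
  induction b, hab using Int.leInduction with
  | base => simp
  | succ b hab ih =>
    have horth : ⟪G b, G (b + 1) - G b⟫_ℝ = 0 := by
      rw [show G (b + 1) - G b = (f - G b) - (f - G (b + 1)) by abel, inner_sub_right,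
        hG le_rfl, hG (by omega), sub_zero]
    have h := norm_add_sq_real (G b) (G (b + 1) - G b)
    rw [add_sub_cancel, horth, mul_zero, add_zero] at h
    rw [← insert_Ioc_right_eq_Ioc_add_one hab, sum_insert (by simp), add_sub_cancel_right,
      add_left_comm, ih, h, add_comm]

theorem norm_le_norm_of_le (hG : IsProjectionChain f G) {a b : ℤ} (hab : a ≤ b) :
    ‖G a‖ ≤ ‖G b‖ := by
  refine (pow_le_pow_iff_left₀ (norm_nonneg _) (norm_nonneg _) two_ne_zero).1 ?_
  rw [← hG.norm_sq_add_sum_Ioc hab]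
  exact le_add_of_nonneg_right (sum_nonneg fun k _ => sq_nonneg _)

theorem norm_sub_le_norm_sub_of_le (hG : IsProjectionChain f G) {a b : ℤ} (hab : a ≤ b) :
    ‖f - G b‖ ≤ ‖f - G a‖ := by
  refine (pow_le_pow_iff_left₀ (norm_nonneg _) (norm_nonneg _) two_ne_zero).1 ?_
  have := hG.norm_le_norm_of_le hab
  have := hG.norm_sq_add_norm_sub_sq a
  have := hG.norm_sq_add_norm_sub_sq b
  nlinarith [norm_nonneg (G a)]

theorem sum_Ioc_le_norm_sq (hG : IsProjectionChain f G) {a b : ℤ} (hab : a ≤ b) :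
    ∑ k ∈ Ioc a b, ‖G k - G (k - 1)‖ ^ 2 ≤ ‖G b‖ ^ 2 := by
  rw [← hG.norm_sq_add_sum_Ioc hab]
  exact le_add_of_nonneg_left (sq_nonneg _)

theorem sum_Ioc_le_norm_sub_sq (hG : IsProjectionChain f G) {a b : ℤ} (hab : a ≤ b) :
    ∑ k ∈ Ioc a b, ‖G k - G (k - 1)‖ ^ 2 ≤ ‖f - G a‖ ^ 2 := by
  have := hG.norm_sq_add_sum_Ioc hab
  have := hG.norm_sq_add_norm_sub_sq a
  have := hG.norm_sq_add_norm_sub_sq b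
  nlinarith [sq_nonneg ‖f - G b‖]

theorem sq_sum_dyadic_neg_le (hG : IsProjectionChain f G) (n : ℕ) :
    (∑ k ∈ Ico (2 ^ n : ℤ) (2 ^ (n + 1)), ‖G (-k) - G (-k - 1)‖) ^ 2 ≤
      2 ^ n * ‖G (-2 ^ n)‖ ^ 2 := by
  refine sq_sum_le_card_mul_sum_sq.trans ?_
  rw [Int.card_Ico_two_pow, Int.sum_Ico_neg (fun j => ‖G j - G (j - 1)‖ ^ 2)]
  push_cast
  gcongr
  exact hG.sum_Ioc_le_norm_sq (neg_le_neg (pow_le_pow_right₀ one_le_two n.le_succ))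

theorem sq_sum_dyadic_pos_le (hG : IsProjectionChain f G) (n : ℕ) :
    (∑ k ∈ Ico (2 ^ n : ℤ) (2 ^ (n + 1)), ‖G (k + 1) - G k‖) ^ 2 ≤
      2 ^ n * ‖f - G (2 ^ n)‖ ^ 2 := by
  refine sq_sum_le_card_mul_sum_sq.trans ?_
  have h := Int.sum_Ico_add_one (fun j => ‖G j - G (j - 1)‖ ^ 2) (2 ^ n) (2 ^ (n + 1))
  simp only [add_sub_cancel_right] at h
  rw [Int.card_Ico_two_pow, h]
  push_cast
  gcongr
  exact hG.sum_Ioc_le_norm_sub_sq (pow_le_pow_right₀ one_le_two n.le_succ)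

theorem summable_norm_sub_sub_one (hG : IsProjectionChain f G)
    (hneg : Summable fun k : ℕ => ‖G (-k)‖ / √k) (hpos : Summable fun k : ℕ => ‖f - G k‖ / √k) :
    Summable fun n : ℤ => ‖G n - G (n - 1)‖ := by
  have hnegpart : Summable fun k : ℕ => ‖G (-k) - G (-k - 1)‖ :=
    summable_of_sum_Ico_two_pow_le (t := fun n => √(2 ^ n) * ‖G (-(2 ^ n : ℕ))‖)
      (fun _ => norm_nonneg _) (fun n => by
        rw [Int.sum_Ico_natCast (fun k => ‖G (-k) - G (-k - 1)‖)]
        push_cast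
        exact le_sqrt_mul_of_sq_le (norm_nonneg _) (hG.sq_sum_dyadic_neg_le n))
      (summable_sqrt_two_pow_mul_of_summable_div_sqrt (w := fun k => ‖G (-k)‖)
        (fun _ => norm_nonneg _) (fun _ _ hij => hG.norm_le_norm_of_le (by omega)) hneg)
  have hpospart : Summable fun k : ℕ => ‖G (k + 1) - G k‖ :=
    summable_of_sum_Ico_two_pow_le (t := fun n => √(2 ^ n) * ‖f - G (2 ^ n : ℕ)‖)
      (fun _ => norm_nonneg _) (fun n => by
        rw [Int.sum_Ico_natCast (fun k => ‖G (k + 1) - G k‖)]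
        push_cast
        exact le_sqrt_mul_of_sq_le (norm_nonneg _) (hG.sq_sum_dyadic_pos_le n))
      (summable_sqrt_two_pow_mul_of_summable_div_sqrt (w := fun k => ‖f - G k‖)
        (fun _ => norm_nonneg _) (fun _ _ hij => hG.norm_sub_le_norm_sub_of_le (by omega)) hpos)
  refine .of_nat_of_neg ((summable_nat_add_iff 1).1 (hpospart.congr fun k => ?_)) hnegpart
  simp only [Nat.cast_add, Nat.cast_one, add_sub_cancel_right]

end IsProjectionChain

section ConditionalExpectation

variable {Ω H : Type} [m : MeasurableSpace Ω] [NormedAddCommGroup H] [InnerProductSpace ℝ H]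
  {μ : Measure Ω}

theorem l2norm_eq_norm {φ : Ω → H} {g : Lp H 2 μ} (h : φ =ᵐ[μ] g) : l2norm m μ φ = ‖g‖ := by
  have hg : ‖g‖ ^ 2 = ∫ ω, ‖g ω‖ ^ 2 ∂μ := by
    rw [← real_inner_self_eq_norm_sq, L2.inner_def]
    exact integral_congr_ae (.of_forall fun ω => real_inner_self_eq_norm_sq _)
  rw [l2norm, integral_congr_ae (h.mono fun ω hω => congrArg (‖·‖ ^ 2) hω), ← hg,
    sqrt_sq (norm_nonneg _)]

theorem l2norm_sub_eq_norm_sub {φ ψ : Ω → H} {g h : Lp H 2 μ} (hφ : φ =ᵐ[μ] g)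
    (hψ : ψ =ᵐ[μ] h) : l2norm m μ (fun ω => φ ω - ψ ω) = ‖g - h‖ :=
  l2norm_eq_norm ((hφ.sub hψ).trans (Lp.coeFn_sub g h).symm)

variable [CompleteSpace H]

theorem inner_condExpL2_sub_condExpL2_eq_zero {m₁ m₂ : MeasurableSpace Ω} (h₁₂ : m₁ ≤ m₂)
    (h₂ : m₂ ≤ m) (f : Lp H 2 μ) :
    ⟪(condExpL2 H ℝ (h₁₂.trans h₂) f : Lp H 2 μ), f - condExpL2 H ℝ h₂ f⟫_ℝ = 0 := by
  rw [real_inner_comm, inner_sub_left, inner_condExpL2_eq_inner_fun h₂ _ _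
    ((aestronglyMeasurable_condExpL2 _ f).mono h₁₂), sub_self]

end ConditionalExpectation

theorem stmt8_general
    (H : Type) [NormedAddCommGroup H] [InnerProductSpace ℝ H] [CompleteSpace H]
    (Ω : Type) [m : MeasurableSpace Ω] (μ : Measure Ω) [IsProbabilityMeasure μ]
    (F : ℤ → MeasurableSpace Ω) (hmono : Monotone F) (hle : ∀ n, F n ≤ m)
    (X : Ω → H) (hX : MemLp X 2 μ) :
    (∀ n : ℕ,
      (∑ k ∈ Finset.Icc (2 ^ n) (2 ^ (n + 1) - 1),
          l2norm m μ (Pproj m μ F (-(k : ℤ)) X)) ^ 2 ≤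
        2 ^ n * ∫ ω, ‖(μ[X | F (-(2 ^ n : ℕ) : ℤ)]) ω‖ ^ 2 ∂μ) ∧
    ((Summable (fun n : ℕ =>
          l2norm m μ (μ[X | F (-(n : ℤ) - 1)]) / Real.sqrt ((n : ℝ) + 1)) ∧
      Summable (fun n : ℕ =>
          l2norm m μ (fun ω => X ω - (μ[X | F ((n : ℤ) + 1)]) ω) /
            Real.sqrt ((n : ℝ) + 1))) →
      Summable (fun n : ℤ => l2norm m μ (Pproj m μ F n X))) := by
  set f := hX.toLp X
  set G : ℤ → Lp H 2 μ := fun n => condExpL2 H ℝ (hle n) f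
  have hG : IsProjectionChain f G := fun i j hij =>
    inner_condExpL2_sub_condExpL2_eq_zero (hmono hij) (hle j) f
  have hcond (n : ℤ) : μ[X | F n] =ᵐ[μ] G n := (hX.condExpL2_ae_eq_condExp (hle n)).symm
  have hE (n : ℤ) : l2norm m μ (μ[X | F n]) = ‖G n‖ := l2norm_eq_norm (hcond n)
  have hP (n : ℤ) : l2norm m μ (Pproj m μ F n X) = ‖G n - G (n - 1)‖ :=
    l2norm_sub_eq_norm_sub (hcond n) (hcond (n - 1))
  have hR (n : ℤ) : l2norm m μ (fun ω => X ω - μ[X | F n] ω) = ‖f - G n‖ :=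
    l2norm_sub_eq_norm_sub hX.coeFn_toLp.symm (hcond n)
  refine ⟨fun n => ?_, fun ⟨hneg, hpos⟩ => ?_⟩
  · rw [← sq_sqrt (integral_nonneg fun ω => sq_nonneg _), ← l2norm, hE,
      Icc_sub_one_right_eq_Ico_of_not_isMin (by simp)]
    push_cast
    simpa only [hP] using hG.sq_sum_dyadic_neg_le n
  · simp only [hP]
    refine hG.summable_norm_sub_sub_one ((summable_nat_add_iff 1).1 (hneg.congr fun n => ?_))
      ((summable_nat_add_iff 1).1 (hpos.congr fun n => ?_))
    · simp only [hE, Nat.cast_add, Nat.cast_one, neg_add']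
    · simp only [hR, Nat.cast_add, Nat.cast_one]

/-- dyadic-block Cauchy–Schwarz estimate
`(∑_{k=2^n}^{2^{n+1}-1} ‖P_{-k}X‖₂)² ≤ 2^n E‖E(X|F_{-2^n})‖²`, and in consequence the
Hannan condition `∑_{n∈ℤ} ‖P_n X‖₂ < ∞` follows from
`∑ ‖E(X|F_{-n})‖₂/√n < ∞` and `∑ ‖X − E(X|F_n)‖₂/√n < ∞`. -/
theorem stmt8
    (H : Type) [NormedAddCommGroup H] [InnerProductSpace ℝ H] [CompleteSpace H]
    [TopologicalSpace.SeparableSpace H]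
    (Ω : Type) [m : MeasurableSpace Ω] (μ : Measure Ω) [IsProbabilityMeasure μ]
    (θ θ' : Ω → Ω) (hθ : MeasurePreserving θ μ μ) (hθ' : Measurable θ')
    (hli : Function.LeftInverse θ' θ) (hri : Function.RightInverse θ' θ)
    (F : ℤ → MeasurableSpace Ω) (hmono : Monotone F) (hle : ∀ n, F n ≤ m)
    (hFθ : ∀ n : ℤ, F (n + 1) = MeasurableSpace.comap θ (F n))
    (X : Ω → H) (hX : MemLp X 2 μ) :
    (∀ n : ℕ,
      (∑ k ∈ Finset.Icc (2 ^ n) (2 ^ (n + 1) - 1),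
          l2norm m μ (Pproj m μ F (-(k : ℤ)) X)) ^ 2 ≤
        2 ^ n * ∫ ω, ‖(μ[X | F (-(2 ^ n : ℕ) : ℤ)]) ω‖ ^ 2 ∂μ) ∧
    ((Summable (fun n : ℕ =>
          l2norm m μ (μ[X | F (-(n : ℤ) - 1)]) / Real.sqrt ((n : ℝ) + 1)) ∧
      Summable (fun n : ℕ =>
          l2norm m μ (fun ω => X ω - (μ[X | F ((n : ℤ) + 1)]) ω) /
            Real.sqrt ((n : ℝ) + 1))) →
      Summable (fun n : ℤ => l2norm m μ (Pproj m μ F n X))) :=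
  stmt8_general H Ω (m := m) μ F hmono hle X hX
end
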